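/- For μ > 0, step sizes 0 ≤ α_τ ≤ min{1, 1/μ}, total step size η = ∑_{τ=0}^{t-1} α_τ, and S = ∏_{τ=0}^{t-1}(1 - α_τ μ), one has S² ≤ 1/(2 e η μ) whenever η > 0. -/

import Mathlib

/-!
Since `1 - x ≤ exp (-x)`, the product `S` is at most `exp (-η μ)`, so `S² ≤ exp (-2 η μ)`;
and `exp (-y) ≤ 1 / (e y)` for `y > 0` because `e y ≤ exp y`.
-/

open Real Finset

lemma Real.prod_one_sub_le_exp_neg_sum {ι : Type*} (s : Finset ι) (x : ι → ℝ)
    (hx : ∀ i ∈ s, x i ≤ 1) : ∏ i ∈ s, (1 - x i) ≤ exp (-∑ i ∈ s, x i) := by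
  rw [← sum_neg_distrib, exp_sum]
  exact prod_le_prod (fun i hi => sub_nonneg.mpr (hx i hi)) fun i _ => one_sub_le_exp_neg (x i)

lemma Real.exp_neg_sq_le {x : ℝ} (hx : 0 < x) : exp (-x) ^ 2 ≤ 1 / (2 * exp 1 * x) := by
  rw [← exp_nat_mul, Nat.cast_ofNat, mul_neg, exp_neg, inv_eq_one_div, mul_assoc]
  exact one_div_le_one_div_of_le (by positivity) ((mul_left_comm _ _ _).trans_le exp_one_mul_le_exp)

theorem stmt_1 (t : ℕ) (μ : ℝ) (hμ : 0 < μ) (α : Fin t → ℝ)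
    (hα : ∀ τ, 0 ≤ α τ ∧ α τ ≤ min 1 (1 / μ))
    (hη : 0 < ∑ τ, α τ) :
    (∏ τ, (1 - α τ * μ)) ^ 2 ≤ 1 / (2 * Real.exp 1 * (∑ τ, α τ) * μ) := by
  have hαμ : ∀ τ, α τ * μ ≤ 1 := fun τ =>
    (le_div_iff₀ hμ).mp (by simpa using (hα τ).2.trans (min_le_right _ _))
  have hprod : ∏ τ, (1 - α τ * μ) ≤ exp (-((∑ τ, α τ) * μ)) := by
    simpa [sum_mul] using
      prod_one_sub_le_exp_neg_sum univ (fun τ => α τ * μ) fun τ _ => hαμ τ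
  calc (∏ τ, (1 - α τ * μ)) ^ 2 ≤ exp (-((∑ τ, α τ) * μ)) ^ 2 :=
        pow_le_pow_left₀ (prod_nonneg fun τ _ => sub_nonneg.mpr (hαμ τ)) hprod 2
    _ ≤ 1 / (2 * exp 1 * (∑ τ, α τ) * μ) := by
        simpa only [mul_assoc] using exp_neg_sq_le (mul_pos hη hμ)
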